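/- Upper bound step: Let S be a subspace of R^n spanned by unit vectors x_1,...,x_N (columns of X) with inradius r > 0. Let ỹ = x̃ + z̃ with x̃ ∈ S and ‖z̃‖₂ ≤ η. Then there exists a ∈ R^N with ‖ỹ − X a‖₂ ≤ η and ‖a‖₁ ≤ ‖x̃‖₂ / r. -/

import Mathlib

open scoped BigOperators

/-- Euclidean (ℓ2) norm of a vector. -/
noncomputable def l2 {n : ℕ} (v : Fin n → ℝ) : ℝ := Real.sqrt (∑ i, (v i) ^ 2)

/-- ℓ1 norm of a vector. -/
noncomputable def l1 {n : ℕ} (v : Fin n → ℝ) : ℝ := ∑ i, |v i|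

/-- Matrix-vector product, where the matrix is given by its columns. -/
noncomputable def mv {n N : ℕ} (A : Fin N → Fin n → ℝ) (c : Fin N → ℝ) : Fin n → ℝ :=
  ∑ j, c j • A j

/-- Euclidean inner product. -/
noncomputable def dot {n : ℕ} (v w : Fin n → ℝ) : ℝ := ∑ i, v i * w i

/-- Symmetrized convex hull of the columns of `X`. -/
def symmHull {n N : ℕ} (X : Fin N → Fin n → ℝ) : Set (Fin n → ℝ) :=
  convexHull ℝ (Set.range X ∪ Set.range (fun j => -X j))

lemma l2_eq_norm {n : ℕ} (v : Fin n → ℝ) : l2 v = ‖WithLp.toLp 2 v‖ := by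
  simp [l2, EuclideanSpace.norm_eq]

lemma l2_smul {n : ℕ} (t : ℝ) (v : Fin n → ℝ) : l2 (t • v) = |t| * l2 v := by
  simp only [l2_eq_norm, WithLp.toLp_smul, norm_smul, Real.norm_eq_abs]

lemma l2_eq_zero_iff {n : ℕ} {v : Fin n → ℝ} : l2 v = 0 ↔ v = 0 := by
  simp [l2_eq_norm]

lemma l1_add_le {N : ℕ} (a b : Fin N → ℝ) : l1 (a + b) ≤ l1 a + l1 b := by
  simpa only [l1, Pi.add_apply, ← Finset.sum_add_distrib] using
    Finset.sum_le_sum fun i _ => abs_add_le (a i) (b i)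

lemma l1_smul {N : ℕ} (t : ℝ) (a : Fin N → ℝ) : l1 (t • a) = |t| * l1 a := by
  simp [l1, abs_mul, Finset.mul_sum]

lemma l1_single {N : ℕ} (j : Fin N) (t : ℝ) : l1 (Pi.single j t) = |t| := by
  simp [l1, Pi.single_apply, apply_ite]

lemma mv_add {n N : ℕ} (X : Fin N → Fin n → ℝ) (a b : Fin N → ℝ) :
    mv X (a + b) = mv X a + mv X b := by
  simp [mv, add_smul, Finset.sum_add_distrib]

lemma mv_smul {n N : ℕ} (X : Fin N → Fin n → ℝ) (t : ℝ) (a : Fin N → ℝ) :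
    mv X (t • a) = t • mv X a := by
  simp [mv, Finset.smul_sum, smul_smul]

lemma mv_single {n N : ℕ} (X : Fin N → Fin n → ℝ) (j : Fin N) (t : ℝ) :
    mv X (Pi.single j t) = t • X j := by
  simp [mv, Pi.single_apply, ite_smul]

lemma convex_mv_image_l1_ball {n N : ℕ} (X : Fin N → Fin n → ℝ) :
    Convex ℝ {v | ∃ a, mv X a = v ∧ l1 a ≤ 1} := by
  rintro _ ⟨a, rfl, ha⟩ _ ⟨b, rfl, hb⟩ s t hs ht hst
  refine ⟨s • a + t • b, by rw [mv_add, mv_smul, mv_smul], ?_⟩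
  calc l1 (s • a + t • b) ≤ s * l1 a + t * l1 b := by
        simpa only [l1_smul, abs_of_nonneg hs, abs_of_nonneg ht] using l1_add_le (s • a) (t • b)
    _ ≤ s * 1 + t * 1 := by gcongr
    _ = 1 := by rw [mul_one, mul_one, hst]

lemma exists_mv_eq_of_mem_symmHull {n N : ℕ} {X : Fin N → Fin n → ℝ} {v : Fin n → ℝ}
    (hv : v ∈ symmHull X) : ∃ a, mv X a = v ∧ l1 a ≤ 1 := by
  refine convexHull_min ?_ (convex_mv_image_l1_ball X) hv
  rintro _ (⟨j, rfl⟩ | ⟨j, rfl⟩)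
  · exact ⟨Pi.single j 1, by rw [mv_single, one_smul], by rw [l1_single, abs_one]⟩
  · exact ⟨Pi.single j (-1), by rw [mv_single, neg_one_smul], by simp [l1_single]⟩

/-- Rescale `x` onto the sphere of radius `r`, where it lies in the symmetrized hull. -/
lemma exists_mv_eq_l1_le {n N : ℕ} {S : Submodule ℝ (Fin n → ℝ)} {X : Fin N → Fin n → ℝ}
    {r : ℝ} (hr : 0 < r) (hball : ∀ v ∈ S, l2 v ≤ r → v ∈ symmHull X)
    {x : Fin n → ℝ} (hx : x ∈ S) : ∃ a, mv X a = x ∧ l1 a ≤ l2 x / r := by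
  rcases eq_or_ne x 0 with rfl | hx0
  · exact ⟨0, by simp [mv], by simp [l1, l2]⟩
  have hc : 0 < l2 x := (Real.sqrt_nonneg _).lt_of_ne' (l2_eq_zero_iff.not.mpr hx0)
  have hv : l2 ((r / l2 x) • x) ≤ r := by
    rw [l2_smul, abs_of_pos (div_pos hr hc), div_mul_cancel₀ r hc.ne']
  obtain ⟨a, hav, ha⟩ := exists_mv_eq_of_mem_symmHull (hball _ (S.smul_mem _ hx) hv)
  refine ⟨(l2 x / r) • a, ?_, ?_⟩
  · rw [mv_smul, hav, smul_smul, div_mul_div_cancel₀ hr.ne', div_self hc.ne', one_smul]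
  · rw [l1_smul, abs_of_pos (div_pos hc hr)]
    exact mul_le_of_le_one_right (div_pos hc hr).le ha

theorem stmt_6_general {n N : ℕ} (S : Submodule ℝ (Fin n → ℝ)) (X : Fin N → Fin n → ℝ)
    (r : ℝ) (hr : 0 < r)
    (hball : ∀ v ∈ S, l2 v ≤ r → v ∈ symmHull X)
    (η : ℝ)
    (yt xt zt : Fin n → ℝ) (hyt : yt = xt + zt) (hxt : xt ∈ S) (hzt : l2 zt ≤ η) :
    ∃ a : Fin N → ℝ, l2 (yt - mv X a) ≤ η ∧ l1 a ≤ l2 xt / r := by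
  obtain ⟨a, hax, ha⟩ := exists_mv_eq_l1_le hr hball hxt
  refine ⟨a, ?_, ha⟩
  rwa [hyt, hax, add_sub_cancel_left]

/-- upper bound step — a feasible point of small ℓ1 norm. -/
theorem stmt_6 {n N : ℕ} (S : Submodule ℝ (Fin n → ℝ)) (X : Fin N → Fin n → ℝ)
    (hXS : ∀ j, X j ∈ S) (hXunit : ∀ j, l2 (X j) = 1)
    (hspan : Submodule.span ℝ (Set.range X) = S)
    (r : ℝ) (hr : 0 < r)
    (hball : ∀ v ∈ S, l2 v ≤ r → v ∈ symmHull X)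
    (η : ℝ) (hη : 0 < η)
    (yt xt zt : Fin n → ℝ) (hyt : yt = xt + zt) (hxt : xt ∈ S) (hzt : l2 zt ≤ η) :
    ∃ a : Fin N → ℝ, l2 (yt - mv X a) ≤ η ∧ l1 a ≤ l2 xt / r :=
  stmt_6_general S X r hr hball η yt xt zt hyt hxt hzt
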